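/- Consider a run of the PRM protocol on n ≥ 1 agents with any input color assignment χ : Fin n → Fin k and any interaction schedule σ : ℕ → Fin n × Fin n pairing distinct agents. Then the bra-kets eventually stop changing: there exists a time T such that for all t ≥ T and all agents a, the bra-ket of agent a at time t equals its bra-ket at time T. -/

import Mathlib

/-!
The bras never change, so only the kets have to stabilise. Give a bra-ket of weight `w` the
potential `w * (2k + 1 - w)` and sum it over all agents. An exchange of kets replaces the weights
`a, b` of the two agents by `a', b'` with `a' + b' ≡ a + b [MOD k]` and `min a' b' < min a b`.
As all weights lie in `[1, k]`, either `a' + b' = a + b`, and the pair spreads apart, so the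
concave potential drops; or `a' + b' = a + b - k`, and the linear term outweighs the quadratic
one. So the total potential, a natural number, strictly decreases at every exchange and is
unchanged otherwise: exchanges eventually stop.
-/

/-- The state of an agent in the PRM protocol: a bra-ket `(bra, ket)` together
with an output value `out`, all colors in `Fin k`. -/
structure AgentState (k : ℕ) where
  bra : Fin k
  ket : Fin k
  out : Fin k

/-- The weight of a bra-ket `(i, j)`: `k` if `i = j`, and `(j - i) mod k` otherwise. -/
def wt (k : ℕ) (i j : Fin k) : ℕ :=
  if i = j then k else (((j : ℤ) - (i : ℤ)) % (k : ℤ)).toNat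

/-- One interaction of the PRM protocol between two agents: they exchange their
kets if this strictly decreases the minimum weight of their two bra-kets; then,
if either agent has a bra-ket of the form `(i, i)`, both set their out value to `i`. -/
def interact {k : ℕ} (s t : AgentState k) : AgentState k × AgentState k :=
  let s1 : AgentState k :=
    if min (wt k s.bra t.ket) (wt k t.bra s.ket) < min (wt k s.bra s.ket) (wt k t.bra t.ket)
      then ⟨s.bra, t.ket, s.out⟩ else s
  let t1 : AgentState k :=
    if min (wt k s.bra t.ket) (wt k t.bra s.ket) < min (wt k s.bra s.ket) (wt k t.bra t.ket)
      then ⟨t.bra, s.ket, t.out⟩ else t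
  if s1.bra = s1.ket then (⟨s1.bra, s1.ket, s1.bra⟩, ⟨t1.bra, t1.ket, s1.bra⟩)
  else if t1.bra = t1.ket then (⟨s1.bra, s1.ket, t1.bra⟩, ⟨t1.bra, t1.ket, t1.bra⟩)
  else (s1, t1)

/-- The run of the PRM protocol on `n` agents with input colors `χ` under
schedule `σ`: `run χ σ t a` is the state of agent `a` at time `t`. -/
def run {k n : ℕ} (χ : Fin n → Fin k) (σ : ℕ → Fin n × Fin n) :
    ℕ → Fin n → AgentState k
  | 0 => fun a => ⟨χ a, χ a, χ a⟩
  | t + 1 => fun a =>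
    let st := run χ σ t
    let p := (σ t).1
    let q := (σ t).2
    if a = p then (interact (st p) (st q)).1
    else if a = q then (interact (st p) (st q)).2
    else st a


lemma wt_pos {k : ℕ} (i j : Fin k) : 0 < wt k i j := by
  unfold wt
  split_ifs with h
  · exact i.pos
  · have hk : (0 : ℤ) < k := by exact_mod_cast i.pos
    refine Int.lt_toNat.mpr (lt_of_le_of_ne (Int.emod_nonneg _ hk.ne') fun h0 => h ?_)
    have hdvd : (k : ℤ) ∣ (j : ℤ) - i := Int.dvd_of_emod_eq_zero h0.symm
    have hlt : |(j : ℤ) - i| < k := abs_sub_lt_iff.mpr ⟨by omega, by omega⟩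
    exact Fin.ext (by have := Int.eq_zero_of_abs_lt_dvd hdvd hlt; omega)

lemma wt_le {k : ℕ} (i j : Fin k) : wt k i j ≤ k := by
  unfold wt
  split_ifs
  · rfl
  · have hk : (0 : ℤ) < k := by exact_mod_cast i.pos
    have := Int.emod_lt_of_pos ((j : ℤ) - i) hk
    omega

lemma wt_modEq {k : ℕ} (i j : Fin k) : (wt k i j : ℤ) ≡ j - i [ZMOD k] := by
  unfold wt
  split_ifs with h
  · simp [h, Int.ModEq]
  · have hk : (0 : ℤ) < k := by exact_mod_cast i.pos
    rw [Int.toNat_of_nonneg (Int.emod_nonneg _ hk.ne')]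
    exact Int.emod_emod_of_dvd _ dvd_rfl

lemma wt_add_wt_modEq {k : ℕ} (i j i' j' : Fin k) :
    (wt k i j' : ℤ) + wt k i' j ≡ wt k i j + wt k i' j' [ZMOD k] := by
  calc (wt k i j' : ℤ) + wt k i' j ≡ (j' - i) + (j - i') [ZMOD k] :=
        (wt_modEq i j').add (wt_modEq i' j)
    _ = (j - i) + (j' - i') := by ring
    _ ≡ wt k i j + wt k i' j' [ZMOD k] := ((wt_modEq i j).add (wt_modEq i' j')).symm

lemma potential_add_lt_of_min_lt {k a b a' b' : ℤ}
    (ha : a ≤ k) (hb : b ≤ k) (ha' : 0 < a') (hb' : 0 < b') (ha'k : a' ≤ k) (hb'k : b' ≤ k)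
    (hmod : a' + b' ≡ a + b [ZMOD k]) (hmin : min a' b' < min a b) :
    a' * (2 * k + 1 - a') + b' * (2 * k + 1 - b') <
      a * (2 * k + 1 - a) + b * (2 * k + 1 - b) := by
  wlog hab' : a' ≤ b' generalizing a' b'
  · have := this hb' ha' hb'k ha'k (by rwa [add_comm]) (by rwa [min_comm]) (by omega)
    linarith
  rw [min_eq_left hab', lt_min_iff] at hmin
  obtain ⟨c, hc⟩ := hmod.dvd
  have hc0 : 0 ≤ c := by nlinarith
  have hc1 : c ≤ 1 := by nlinarith
  obtain rfl | rfl : c = 0 ∨ c = 1 := by omega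
  · nlinarith [mul_pos (sub_pos.2 hmin.1) (sub_pos.2 hmin.2)]
  · nlinarith

def wtPotential (k w : ℕ) : ℕ := w * (2 * k + 1 - w)

lemma wtPotential_cast {k w : ℕ} (hw : w ≤ k) :
    (wtPotential k w : ℤ) = w * (2 * k + 1 - w) := by
  rw [wtPotential, Nat.cast_mul, Nat.cast_sub (by omega)]
  push_cast
  ring

lemma wtPotential_add_lt_of_min_lt {k : ℕ} {i j i' j' : Fin k}
    (h : min (wt k i j') (wt k i' j) < min (wt k i j) (wt k i' j')) :
    wtPotential k (wt k i j') + wtPotential k (wt k i' j) <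
      wtPotential k (wt k i j) + wtPotential k (wt k i' j') := by
  have hmin : min (wt k i j' : ℤ) (wt k i' j) < min (wt k i j : ℤ) (wt k i' j') := by
    exact_mod_cast h
  have hpos (i j : Fin k) : 0 < (wt k i j : ℤ) := by exact_mod_cast wt_pos i j
  have hle (i j : Fin k) : (wt k i j : ℤ) ≤ k := by exact_mod_cast wt_le i j
  have key := potential_add_lt_of_min_lt (hle i j) (hle i' j') (hpos i j') (hpos i' j)
    (hle i j') (hle i' j) (wt_add_wt_modEq i j i' j') hmin
  zify
  rwa [wtPotential_cast (wt_le _ _), wtPotential_cast (wt_le _ _), wtPotential_cast (wt_le _ _),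
    wtPotential_cast (wt_le _ _)]

def ExchangesKets {k : ℕ} (s t : AgentState k) : Prop :=
  min (wt k s.bra t.ket) (wt k t.bra s.ket) < min (wt k s.bra s.ket) (wt k t.bra t.ket)

instance {k : ℕ} (s t : AgentState k) : Decidable (ExchangesKets s t) :=
  inferInstanceAs (Decidable (_ < _))

lemma ExchangesKets.irrefl {k : ℕ} (s : AgentState k) : ¬ ExchangesKets s s :=
  lt_irrefl _

section interact

variable {k : ℕ} (s t : AgentState k)

lemma interact_fst_bra : (interact s t).1.bra = s.bra := by
  dsimp only [interact]; split_ifs <;> rfl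

lemma interact_snd_bra : (interact s t).2.bra = t.bra := by
  dsimp only [interact]; split_ifs <;> rfl

lemma interact_fst_ket : (interact s t).1.ket = if ExchangesKets s t then t.ket else s.ket := by
  by_cases h : ExchangesKets s t <;> rw [ExchangesKets] at h <;>
    simp only [interact, ExchangesKets, h, if_true, if_false] <;> split_ifs <;> rfl

lemma interact_snd_ket : (interact s t).2.ket = if ExchangesKets s t then s.ket else t.ket := by
  by_cases h : ExchangesKets s t <;> rw [ExchangesKets] at h <;>
    simp only [interact, ExchangesKets, h, if_true, if_false] <;> split_ifs <;> rfl

end interact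

section run

variable {k n : ℕ} (χ : Fin n → Fin k) (σ : ℕ → Fin n × Fin n)

lemma run_bra (t : ℕ) (a : Fin n) : (run χ σ t a).bra = χ a := by
  induction t generalizing a with
  | zero => rfl
  | succ t ih =>
    simp only [run]
    split_ifs with hp hq
    · rw [interact_fst_bra, ih, hp]
    · rw [interact_snd_bra, ih, hq]
    · exact ih a

lemma run_succ_ket (t : ℕ) (a : Fin n) : (run χ σ (t + 1) a).ket =
    if ExchangesKets (run χ σ t (σ t).1) (run χ σ t (σ t).2) then
      (run χ σ t (Equiv.swap (σ t).1 (σ t).2 a)).ket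
    else (run χ σ t a).ket := by
  simp only [run]
  by_cases hp : a = (σ t).1
  · rw [if_pos hp, interact_fst_ket, hp, Equiv.swap_apply_left]
  by_cases hq : a = (σ t).2
  · rw [if_neg hp, if_pos hq, interact_snd_ket, hq, Equiv.swap_apply_right]
  · rw [if_neg hp, if_neg hq, Equiv.swap_apply_of_ne_of_ne hp hq, ite_self]

def runPotential (t : ℕ) : ℕ := ∑ a, wtPotential k (wt k (χ a) (run χ σ t a).ket)

lemma runPotential_succ_lt {t : ℕ}
    (h : ExchangesKets (run χ σ t (σ t).1) (run χ σ t (σ t).2)) :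
    runPotential χ σ (t + 1) < runPotential χ σ t := by
  have hpq : (σ t).1 ≠ (σ t).2 := fun hpq => ExchangesKets.irrefl _ (hpq ▸ h)
  set f := fun s a => wtPotential k (wt k (χ a) (run χ σ s a).ket)
  have hrest : ∑ a ∈ {(σ t).1, (σ t).2}ᶜ, f (t + 1) a =
      ∑ a ∈ {(σ t).1, (σ t).2}ᶜ, f t a := by
    refine Finset.sum_congr rfl fun a ha => ?_
    simp only [Finset.mem_compl, Finset.mem_insert, Finset.mem_singleton, not_or] at ha
    simp only [f, run_succ_ket, if_pos h, Equiv.swap_apply_of_ne_of_ne ha.1 ha.2]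
  have hpair : f (t + 1) (σ t).1 + f (t + 1) (σ t).2 < f t (σ t).1 + f t (σ t).2 := by
    simp only [f, run_succ_ket, if_pos h, Equiv.swap_apply_left, Equiv.swap_apply_right]
    simp only [ExchangesKets, run_bra] at h
    exact wtPotential_add_lt_of_min_lt h
  unfold runPotential
  rw [← Finset.sum_add_sum_compl {(σ t).1, (σ t).2},
    ← Finset.sum_add_sum_compl {(σ t).1, (σ t).2} (f t),
    Finset.sum_pair hpq, Finset.sum_pair hpq, hrest]
  exact Nat.add_lt_add_right hpair _

lemma runPotential_antitone : Antitone (runPotential χ σ) := by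
  refine antitone_nat_of_succ_le fun t => ?_
  by_cases h : ExchangesKets (run χ σ t (σ t).1) (run χ σ t (σ t).2)
  · exact (runPotential_succ_lt χ σ h).le
  · simp only [runPotential, run_succ_ket, if_neg h, le_refl]

end run

theorem prm_stabilization_general {k n : ℕ}
    (χ : Fin n → Fin k) (σ : ℕ → Fin n × Fin n) :
    ∃ T : ℕ, ∀ t : ℕ, T ≤ t → ∀ a : Fin n,
      (run χ σ t a).bra = (run χ σ T a).bra ∧
      (run χ σ t a).ket = (run χ σ T a).ket := by
  obtain ⟨T, hT⟩ := WellFoundedLT.antitone_chain_condition (runPotential_antitone χ σ)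
  refine ⟨T, fun t ht a => ⟨by rw [run_bra, run_bra], ?_⟩⟩
  induction t, ht using Nat.le_induction generalizing a with
  | base => rfl
  | succ t ht ih =>
    have hstill : ¬ ExchangesKets (run χ σ t (σ t).1) (run χ σ t (σ t).2) := fun h =>
      (runPotential_succ_lt χ σ h).ne (by rw [← hT t ht, ← hT (t + 1) (by omega)])
    rw [run_succ_ket, if_neg hstill, ih]

/-- Theorem (Stabilization): in any run of the PRM protocol, the bra-kets
eventually stop changing. -/
theorem prm_stabilization {k n : ℕ} (hk : 1 ≤ k) (hn : 1 ≤ n)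
    (χ : Fin n → Fin k) (σ : ℕ → Fin n × Fin n)
    (hσ : ∀ t : ℕ, (σ t).1 ≠ (σ t).2) :
    ∃ T : ℕ, ∀ t : ℕ, T ≤ t → ∀ a : Fin n,
      (run χ σ t a).bra = (run χ σ T a).bra ∧
      (run χ σ t a).ket = (run χ σ T a).ket :=
  prm_stabilization_general χ σ
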